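/- arXiv:2207.04690 — 7 statements merged into one kernel-verified Lean document; each statement's English description precedes it below -/
import Mathlib

section
/- For any positive integer T divisible by 4, the identity ∑_{t=1}^{T/4} (T - 4(t-1)) · C(T+1, 2t-1) = 2^{T-1} + (T/2) · C(T, T/2) holds, where C(n,k) denotes the binomial coefficient. -/
private lemma alt_sum (M : ℕ) (j : ℕ) :
    ∑ k ∈ Finset.range (j+1), (-1:ℤ)^k * ((M+1).choose k) = (-1)^j * (M.choose j) := by
  induction j with
  | zero => simp
  | succ j ih =>
    rw [Finset.sum_range_succ, ih, Nat.choose_succ_succ']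
    push_cast
    ring

private lemma split_even (f : ℕ → ℤ) (m : ℕ) :
    ∑ k ∈ Finset.range (2*m), f k
      = ∑ j ∈ Finset.range m, f (2*j) + ∑ j ∈ Finset.range m, f (2*j+1) := by
  induction m with
  | zero => simp
  | succ m ih =>
    have h : 2*(m+1) = (2*m+1)+1 := by ring
    rw [h, Finset.sum_range_succ, Finset.sum_range_succ, ih,
      Finset.sum_range_succ, Finset.sum_range_succ]
    ring

private lemma split_odd (f : ℕ → ℤ) (m : ℕ) :
    ∑ k ∈ Finset.range (2*m+1), f k
      = ∑ j ∈ Finset.range (m+1), f (2*j) + ∑ j ∈ Finset.range m, f (2*j+1) := by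
  rw [Finset.sum_range_succ, split_even, Finset.sum_range_succ]
  ring

private lemma key_term (T j : ℕ) :
    ((T:ℤ)+1-2*(2*j+1)) * ((T+1).choose (2*j+1))
      = ((T:ℤ)+1) * ((T.choose (2*j+1)) - T.choose (2*j)) := by
  have h1 : ((T:ℤ)+1) * T.choose (2*j) = ((T+1).choose (2*j+1)) * (2*j+1) := by
    exact_mod_cast congrArg (Nat.cast : ℕ → ℤ) (Nat.add_one_mul_choose_eq T (2*j))
  have hP : (((T+1).choose (2*j+1) : ℤ)) = T.choose (2*j) + T.choose (2*j+1) := by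
    exact_mod_cast congrArg (Nat.cast : ℕ → ℤ) (Nat.choose_succ_succ T (2*j))
  linear_combination 2 * h1 + ((T:ℤ)+1) * hP

theorem stmt_0 (T : ℕ) (hT : 0 < T) (h4 : 4 ∣ T) :
    ∑ t ∈ Finset.Icc 1 (T / 4), (T - 4 * (t - 1)) * Nat.choose (T + 1) (2 * t - 1) =
      2 ^ (T - 1) + (T / 2) * Nat.choose T (T / 2) := by
  obtain ⟨m, rfl⟩ := h4
  obtain ⟨s, rfl⟩ : ∃ s, m = s + 1 := ⟨m - 1, by omega⟩
  have h1 : 4 * (s+1) / 4 = s + 1 := by omega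
  have h2 : 4 * (s+1) / 2 = 2*s + 2 := by omega
  have h3 : 4 * (s+1) - 1 = 4*s + 3 := by omega
  rw [h1, h2, h3, show Finset.Icc 1 (s+1) = Finset.Ico 1 (s+2) by rw [← Finset.Ico_add_one_right_eq_Icc]; rfl,
    Finset.sum_Ico_eq_sum_range]
  -- reduce to a ℤ identity
  have key : ∑ j ∈ Finset.range (s+1),
      ((4*(s:ℤ)+4) - 4*j) * (((4*s+5).choose (2*j+1) : ℤ))
      = 2^(4*s+3) + (2*(s:ℤ)+2) * ((4*(s+1)).choose (2*s+2)) := by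
    have T4 : 4*(s+1) = 4*s+4 := by ring
    rw [T4]
    -- alternating partial sums
    have alt1 : ∑ k ∈ Finset.range (2*s+2), (-1:ℤ)^k * ((4*s+4).choose k)
        = -(((4*s+3).choose (2*s+1) : ℤ)) := by
      have := alt_sum (4*s+3) (2*s+1)
      have e1 : (4*s+3)+1 = 4*s+4 := by ring
      have e2 : (2*s+1)+1 = 2*s+2 := by ring
      rw [e1, e2] at this
      rw [this]
      have hodd : Odd (2*s+1) := ⟨s, by ring⟩
      rw [hodd.neg_one_pow]
      ring
    have alt2 : ∑ k ∈ Finset.range (2*s+3), (-1:ℤ)^k * ((4*s+5).choose k)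
        = ((4*s+4).choose (2*s+2) : ℤ) := by
      have := alt_sum (4*s+4) (2*s+2)
      have e1 : (4*s+4)+1 = 4*s+5 := by ring
      have e2 : (2*s+2)+1 = 2*s+3 := by ring
      rw [e1, e2] at this
      rw [this]
      have hev : Even (2*s+2) := ⟨s+1, by ring⟩
      rw [hev.neg_one_pow, one_mul]
    have half : ∑ k ∈ Finset.range (2*s+3), (((4*s+5).choose k : ℤ))
        = 2^(4*s+4) := by
      have := Nat.sum_range_choose_halfway (2*s+2)
      have e1 : 2*(2*s+2)+1 = 4*s+5 := by ring
      have e2 : (2*s+2)+1 = 2*s+3 := by ring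
      rw [e1, e2] at this
      have : ((∑ k ∈ Finset.range (2*s+3), (4*s+5).choose k : ℕ) : ℤ)
          = ((4^(2*s+2) : ℕ) : ℤ) := by rw [this]
      push_cast at this
      rw [this]
      rw [show (4:ℤ) = 2^2 by norm_num, ← pow_mul]
      ring_nf
    have central : ((4*s+4).choose (2*s+2) : ℤ) = 2 * ((4*s+3).choose (2*s+1)) := by
      have hp : (4*s+4).choose (2*s+2) = (4*s+3).choose (2*s+1) + (4*s+3).choose (2*s+2) := by
        have e1 : 4*s+4 = (4*s+3)+1 := by ring
        have e2 : 2*s+2 = (2*s+1)+1 := by ring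
        rw [e1, e2, Nat.choose_succ_succ]
      have hsymm : (4*s+3).choose (2*s+2) = (4*s+3).choose (2*s+1) := by
        have : (4*s+3) - (2*s+2) = 2*s+1 := by omega
        rw [← this, Nat.choose_symm (by omega)]
      rw [hp, hsymm]
      push_cast
      ring
    -- split sums into even/odd indices
    have sE := split_even (fun k => (-1:ℤ)^k * ((4*s+4).choose k)) (s+1)
    have sO1 := split_odd (fun k => (((4*s+5).choose k : ℤ))) (s+1)
    have sO2 := split_odd (fun k => (-1:ℤ)^k * ((4*s+5).choose k)) (s+1)
    have e3 : 2*(s+1) = 2*s+2 := by ring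
    have e4 : 2*(s+1)+1 = 2*s+3 := by ring
    rw [e3] at sE
    rw [e4] at sO1 sO2
    simp only [pow_mul, pow_add, neg_one_sq, one_pow, pow_one, one_mul, neg_one_mul] at sE sO2
    -- name the pieces
    set a : ℤ := ∑ j ∈ Finset.range (s+1), (((4*s+4).choose (2*j) : ℤ)) with ha
    set b : ℤ := ∑ j ∈ Finset.range (s+1), (((4*s+4).choose (2*j+1) : ℤ)) with hb
    set A : ℤ := ∑ j ∈ Finset.range (s+1), (((4*s+5).choose (2*j+1) : ℤ)) with hA
    set B : ℤ := ∑ j ∈ Finset.range (s+2), (((4*s+5).choose (2*j) : ℤ)) with hB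
    rw [sE] at alt1
    rw [sO2] at alt2
    rw [sO1] at half
    -- simplify negated sum in sO versions
    have hab : a - b = -(((4*s+3).choose (2*s+1) : ℤ)) := by
      rw [← alt1]; simp [ha, hb, Finset.sum_sub_distrib, sub_eq_add_neg, Finset.sum_neg_distrib]
    have hBA : B - A = ((4*s+4).choose (2*s+2) : ℤ) := by
      rw [← alt2]; simp [hA, hB, Finset.sum_sub_distrib, sub_eq_add_neg, Finset.sum_neg_distrib]
    have hBA2 : B + A = 2^(4*s+4) := half
    -- rewrite LHS using key_term
    have hL : ∑ j ∈ Finset.range (s+1),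
        ((4*(s:ℤ)+4) - 4*j) * (((4*s+5).choose (2*j+1) : ℤ))
        = (4*(s:ℤ)+5) * (b - a) + A := by
      have step : ∀ j ∈ Finset.range (s+1),
          ((4*(s:ℤ)+4) - 4*j) * (((4*s+5).choose (2*j+1) : ℤ))
          = (4*(s:ℤ)+5) * ((((4*s+4).choose (2*j+1) : ℤ)) - ((4*s+4).choose (2*j)))
            + (((4*s+5).choose (2*j+1) : ℤ)) := by
        intro j _
        have := key_term (4*s+4) j
        have e5 : (4*s+4)+1 = 4*s+5 := by ring
        rw [e5] at this
        push_cast at this ⊢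
        linear_combination this
      rw [Finset.sum_congr rfl step, Finset.sum_add_distrib, ← Finset.mul_sum,
        Finset.sum_sub_distrib]
    rw [hL]
    have hA' : 2 * A = 2^(4*s+4) - 2 * ((4*s+3).choose (2*s+1)) := by
      have := central
      linarith [hBA, hBA2]
    have hfin : (2:ℤ)^(4*s+4) = 2 * 2^(4*s+3) := by
      rw [pow_succ]; ring
    rw [central]
    have hba : b - a = ((4*s+3).choose (2*s+1) : ℤ) := by linarith [hab]
    rw [hba]
    -- 2 * goal
    nlinarith [hA', hfin]
  -- transfer to ℕ
  have cast_eq : ((∑ i ∈ Finset.range (s+2-1),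
      (4*(s+1) - 4*((1+i)-1)) * ((4*(s+1)+1).choose (2*(1+i)-1)) : ℕ) : ℤ)
      = ((2^(4*s+3) + (2*s+2) * ((4*(s+1)).choose (2*s+2)) : ℕ) : ℤ) := by
    push_cast
    rw [← key]
    apply Finset.sum_congr
    · norm_num
    · intro i hi
      simp only [Finset.mem_range] at hi
      have e1 : (1+i) - 1 = i := by omega
      have e2 : 2*(1+i) - 1 = 2*i+1 := by omega
      have e3 : 4*(s+1)+1 = 4*s+5 := by ring
      rw [e1, e2, e3]
      have hle : 4*i ≤ 4*(s+1) := by omega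
      push_cast [Nat.cast_sub hle]
      ring
  exact_mod_cast cast_eq
end

section
/- Let T be divisible by 4. Define f(S) = (1/3)(S+T) for S ≥ T/2 and f(S) = (2/3)S + (1/3)⌊(3T−2S)/4⌋ for S < T/2. Then T/2 − (1/2^T) ∑_{S=0}^{T} f(S) · C(T,S) ≥ (1/(12·2^T)) ∑_{t=1}^{T/4} (T − 4(t−1)) · C(T+1, 2t−1). -/
open Finset

lemma pair_sum (m : ℕ) (f : ℕ → ℕ) :
    ∑ S ∈ range (2 * m), f S = ∑ j ∈ range m, (f (2 * j) + f (2 * j + 1)) := by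
  induction m with
  | zero => simp
  | succ n ih =>
    have h : 2 * (n + 1) = (2 * n + 1) + 1 := by ring
    rw [h, sum_range_succ, sum_range_succ, ih, sum_range_succ]
    ring

lemma key_nat (m : ℕ) :
    ∑ S ∈ range (2 * m), (m - S / 2) * Nat.choose (4 * m) S
      = ∑ j ∈ range m, (m - j) * Nat.choose (4 * m + 1) (2 * j + 1) := by
  rw [pair_sum]
  refine sum_congr rfl fun j hj => ?_
  have h1 : 2 * j / 2 = j := by omega
  have h2 : (2 * j + 1) / 2 = j := by omega
  have h3 : Nat.choose (4 * m + 1) (2 * j + 1)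
      = Nat.choose (4 * m) (2 * j) + Nat.choose (4 * m) (2 * j + 1) :=
    Nat.choose_succ_succ _ _
  rw [h1, h2, h3, Nat.mul_add]

lemma sum_mul_choose (T : ℕ) :
    (2 : ℚ) * ∑ S ∈ range (T + 1), (S : ℚ) * Nat.choose T S = T * 2 ^ T := by
  have h := Finset.sum_range_reflect (fun S => (S : ℚ) * Nat.choose T S) (T + 1)
  calc (2 : ℚ) * ∑ S ∈ range (T + 1), (S : ℚ) * Nat.choose T S
      = (∑ S ∈ range (T + 1), ((T + 1 - 1 - S : ℕ) : ℚ) * Nat.choose T (T + 1 - 1 - S))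
        + ∑ S ∈ range (T + 1), (S : ℚ) * Nat.choose T S := by
        rw [h]; ring
    _ = ∑ S ∈ range (T + 1), (T : ℚ) * Nat.choose T S := by
        rw [← Finset.sum_add_distrib]
        refine sum_congr rfl fun S hS => ?_
        have hS' : S ≤ T := by simpa [Nat.lt_succ_iff] using hS
        have e : T + 1 - 1 - S = T - S := by omega
        rw [e, Nat.choose_symm hS', Nat.cast_sub hS']
        ring
    _ = T * 2 ^ T := by
        rw [← Finset.mul_sum]
        congr 1
        rw [← Nat.cast_sum]
        rw [Nat.sum_range_choose]
        push_cast
        ring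

theorem stmt_6 (T : ℕ) (hT : 0 < T) (h4 : 4 ∣ T) :
    (T : ℚ) / 2 - (1 / 2 ^ T) *
        ∑ S ∈ Finset.range (T + 1),
          (if (S : ℚ) ≥ (T : ℚ) / 2 then ((S : ℚ) + T) / 3
            else 2 * (S : ℚ) / 3 + (((3 * T - 2 * S) / 4 : ℕ) : ℚ) / 3) * Nat.choose T S ≥
      (1 / (12 * 2 ^ T)) *
        ∑ t ∈ Finset.Icc 1 (T / 4), ((T : ℚ) - 4 * ((t : ℚ) - 1)) * Nat.choose (T + 1) (2 * t - 1) := by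
  obtain ⟨m, rfl⟩ := h4
  have hm : 0 < m := by omega
  apply ge_of_eq
  -- simplify the RHS (Icc) sum
  have hIcc : (∑ t ∈ Finset.Icc 1 (4 * m / 4), (((4 * m : ℕ) : ℚ) - 4 * ((t : ℚ) - 1)) *
        Nat.choose (4 * m + 1) (2 * t - 1))
      = 4 * ∑ j ∈ range m, ((m - j : ℕ) : ℚ) * Nat.choose (4 * m + 1) (2 * j + 1) := by
    have hq : 4 * m / 4 = m := by omega
    rw [hq, ← Finset.Ico_add_one_right_eq_Icc, Finset.sum_Ico_eq_sum_range, Finset.mul_sum]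
    refine sum_congr (by norm_num) fun j hj => ?_
    have hj' : j < m := mem_range.mp (by simpa using hj)
    have e1 : 2 * (1 + j) - 1 = 2 * j + 1 := by omega
    rw [e1, Nat.cast_sub hj'.le]
    push_cast
    ring
  -- decompose the summand of the LHS sum
  have hdecomp : ∀ S ∈ range (4 * m + 1),
      (if (S : ℚ) ≥ ((4 * m : ℕ) : ℚ) / 2 then ((S : ℚ) + (4 * m : ℕ)) / 3
        else 2 * (S : ℚ) / 3 + (((3 * (4 * m) - 2 * S) / 4 : ℕ) : ℚ) / 3) * Nat.choose (4 * m) S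
      = ((S : ℚ) + (4 * m : ℕ)) / 3 * Nat.choose (4 * m) S
        - (if S < 2 * m then (((m - S / 2 : ℕ) : ℚ) / 3) * Nat.choose (4 * m) S else 0) := by
    intro S hS
    by_cases hcase : S < 2 * m
    · have hlt : (S : ℚ) < ((4 * m : ℕ) : ℚ) / 2 := by
        have h2 : (2 * S : ℚ) < ((4 * m : ℕ) : ℚ) := by exact_mod_cast (by omega : 2 * S < 4 * m)
        linarith
      rw [if_neg (not_le.mpr hlt), if_pos hcase]
      have e1 : (3 * (4 * m) - 2 * S) / 4 = 3 * m - (S + 1) / 2 := by omega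
      have e2 : (S + 1) / 2 ≤ 3 * m := by omega
      have e3 : S / 2 ≤ m := by omega
      have e4 : (S + 1) / 2 = S - S / 2 := by omega
      have e5 : S / 2 ≤ S := Nat.div_le_self _ _
      rw [e1, e4, Nat.cast_sub (by omega : S - S / 2 ≤ 3 * m), Nat.cast_sub e5,
        Nat.cast_sub e3]
      push_cast
      ring
    · have hge : (S : ℚ) ≥ ((4 * m : ℕ) : ℚ) / 2 := by
        have h2 : ((4 * m : ℕ) : ℚ) ≤ (2 * S : ℚ) := by exact_mod_cast (by omega : 4 * m ≤ 2 * S)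
        linarith
      rw [if_pos hge, if_neg hcase, sub_zero]
  rw [Finset.sum_congr rfl hdecomp, Finset.sum_sub_distrib]
  -- the subtracted if-sum restricts to range (2*m)
  have hif : (∑ S ∈ range (4 * m + 1),
        if S < 2 * m then (((m - S / 2 : ℕ) : ℚ) / 3) * Nat.choose (4 * m) S else 0)
      = ∑ S ∈ range (2 * m), (((m - S / 2 : ℕ) : ℚ) / 3) * Nat.choose (4 * m) S := by
    rw [← Finset.sum_subset (Finset.range_subset_range.mpr (by omega : 2 * m ≤ 4 * m + 1))
      (fun x _ hx => by rw [if_neg (by simpa using hx)])]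
    exact sum_congr rfl fun S hS => if_pos (mem_range.mp hS)
  rw [hif]
  -- compute the first sum
  have hfirst : (∑ S ∈ range (4 * m + 1), ((S : ℚ) + (4 * m : ℕ)) / 3 * Nat.choose (4 * m) S)
      = (4 * m : ℚ) * 2 ^ (4 * m) / 2 := by
    have h1 := sum_mul_choose (4 * m)
    push_cast at h1
    have h2 : (∑ S ∈ range (4 * m + 1), ((4 * m : ℕ) : ℚ) * Nat.choose (4 * m) S)
        = (4 * m : ℚ) * 2 ^ (4 * m) := by
      rw [← Finset.mul_sum, ← Nat.cast_sum, Nat.sum_range_choose]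
      push_cast; ring
    calc (∑ S ∈ range (4 * m + 1), ((S : ℚ) + (4 * m : ℕ)) / 3 * Nat.choose (4 * m) S)
        = (1/3) * ((∑ S ∈ range (4 * m + 1), (S : ℚ) * Nat.choose (4 * m) S)
          + ∑ S ∈ range (4 * m + 1), ((4 * m : ℕ) : ℚ) * Nat.choose (4 * m) S) := by
          rw [← Finset.sum_add_distrib, Finset.mul_sum]
          exact sum_congr rfl fun S _ => by ring
      _ = (4 * m : ℚ) * 2 ^ (4 * m) / 2 := by
          rw [h2]
          have : (∑ S ∈ range (4 * m + 1), (S : ℚ) * Nat.choose (4 * m) S)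
              = (4 * m : ℚ) * 2 ^ (4 * m) / 2 := by linarith
          rw [this]; ring
  rw [hfirst, hIcc]
  -- use the key natural-number identity
  have hkey : (∑ S ∈ range (2 * m), (((m - S / 2 : ℕ) : ℚ) / 3) * Nat.choose (4 * m) S)
      = (1/3) * ∑ j ∈ range m, ((m - j : ℕ) : ℚ) * Nat.choose (4 * m + 1) (2 * j + 1) := by
    have := key_nat m
    have hc := congrArg (fun n : ℕ => (n : ℚ)) this
    push_cast at hc
    calc (∑ S ∈ range (2 * m), (((m - S / 2 : ℕ) : ℚ) / 3) * Nat.choose (4 * m) S)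
        = (1/3) * ∑ S ∈ range (2 * m), ((m - S / 2 : ℕ) : ℚ) * Nat.choose (4 * m) S := by
          rw [Finset.mul_sum]; exact sum_congr rfl fun S _ => by ring
      _ = _ := by rw [hc]
  rw [hkey]
  have h2T : (2 : ℚ) ^ (4 * m) ≠ 0 := by positivity
  push_cast
  field_simp
  ring
end

section
/- Let T be divisible by 4 and f(S) be defined as f(S) = (1/3)(S+T) for S ≥ T/2 and f(S) = (2/3)S + (1/3)⌊(3T−2S)/4⌋ for S < T/2. Then T/2 − (1/2^T) ∑_{S=0}^{T} f(S) · C(T,S) ≥ 1/24 + (√2/48)·√T. -/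
open Finset


private lemma aux_cb : ∀ n : ℕ, 1 ≤ n → (4:ℝ)^n ≤ 2 * (Nat.centralBinom n) * Real.sqrt n := by
  intro n
  induction n with
  | zero => intro h; omega
  | succ k ih =>
    intro _
    rcases Nat.eq_zero_or_pos k with hk | hk
    · subst hk
      norm_num [Nat.centralBinom, Nat.choose]
    · have ih' := ih hk
      have hs0 : (0:ℝ) ≤ Real.sqrt k := Real.sqrt_nonneg _
      have ht0 : (0:ℝ) ≤ Real.sqrt (k+1:ℕ) := Real.sqrt_nonneg _
      have hs2 : Real.sqrt k * Real.sqrt k = (k:ℝ) := Real.mul_self_sqrt (by positivity)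
      have ht2 : Real.sqrt (k+1:ℕ) * Real.sqrt (k+1:ℕ) = (k:ℝ) + 1 := by
        push_cast
        exact Real.mul_self_sqrt (by positivity)
      have hC0 : (0:ℝ) < (Nat.centralBinom k : ℝ) := by
        exact_mod_cast Nat.centralBinom_pos k
      have key : ((k:ℝ)+1) * (Nat.centralBinom (k+1)) = 2*(2*(k:ℝ)+1)*(Nat.centralBinom k) := by
        exact_mod_cast congrArg (Nat.cast : ℕ → ℝ) (Nat.succ_mul_centralBinom_succ k)
      have step : 2 * Real.sqrt k * ((k:ℝ)+1) ≤ (2*(k:ℝ)+1) * Real.sqrt (k+1:ℕ) := by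
        nlinarith [mul_nonneg ht0 (sq_nonneg (Real.sqrt k - Real.sqrt (k+1:ℕ))),
          mul_nonneg hs0 ht0]
      have hk1 : (0:ℝ) < (k:ℝ)+1 := by positivity
      have main : ((k:ℝ)+1) * (4:ℝ)^(k+1) ≤ ((k:ℝ)+1) * (2 * (Nat.centralBinom (k+1)) * Real.sqrt (k+1:ℕ)) := by
        have h1 : ((k:ℝ)+1) * (2 * (Nat.centralBinom (k+1)) * Real.sqrt (k+1:ℕ))
            = 4*(2*(k:ℝ)+1)*(Nat.centralBinom k)*Real.sqrt (k+1:ℕ) := by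
          rw [show ((k:ℝ)+1) * (2 * (Nat.centralBinom (k+1)) * Real.sqrt (k+1:ℕ))
              = 2 * (((k:ℝ)+1) * (Nat.centralBinom (k+1))) * Real.sqrt (k+1:ℕ) by ring, key]
          ring
        rw [h1]
        calc ((k:ℝ)+1) * (4:ℝ)^(k+1) = 4*((k:ℝ)+1) * 4^k := by ring
          _ ≤ 4*((k:ℝ)+1) * (2 * (Nat.centralBinom k) * Real.sqrt k) := by
              apply mul_le_mul_of_nonneg_left ih' (by positivity)
          _ = 4*(Nat.centralBinom k) * (2 * Real.sqrt k * ((k:ℝ)+1)) := by ring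
          _ ≤ 4*(Nat.centralBinom k) * ((2*(k:ℝ)+1) * Real.sqrt (k+1:ℕ)) := by
              apply mul_le_mul_of_nonneg_left step (by positivity)
          _ = 4*(2*(k:ℝ)+1)*(Nat.centralBinom k)*Real.sqrt (k+1:ℕ) := by ring
      have := le_of_mul_le_mul_left main hk1
      exact_mod_cast this


private lemma aux_sum_mul_choose (n : ℕ) : ∑ S ∈ range (n+2), S * (n+1).choose S = (n+1) * 2^n := by
  rw [Finset.sum_range_succ']
  simp only [zero_mul, add_zero]
  calc ∑ k ∈ range (n+1), (k+1) * (n+1).choose (k+1)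
      = ∑ k ∈ range (n+1), (n+1) * n.choose k := by
        apply Finset.sum_congr rfl
        intro k _
        rw [mul_comm (k+1)]
        exact (Nat.add_one_mul_choose_eq n k).symm
    _ = (n+1) * ∑ k ∈ range (n+1), n.choose k := by rw [Finset.mul_sum]
    _ = (n+1) * 2^n := by rw [Nat.sum_range_choose]

private lemma auxL1 (T : ℕ) (hT : 0 < T) :
    ∑ S ∈ Finset.range (T+1), ((T:ℝ) - 2*S) * T.choose S = 0 := by
  have h1 : ∑ S ∈ Finset.range (T+1), S * T.choose S = T * 2^(T-1) := by
    obtain ⟨n, rfl⟩ : ∃ n, T = n + 1 := ⟨T-1, by omega⟩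
    simpa using aux_sum_mul_choose n
  have c1 := congrArg (Nat.cast : ℕ → ℝ) h1
  have c2 := congrArg (Nat.cast : ℕ → ℝ) (Nat.sum_range_choose T)
  push_cast at c1 c2
  have e : ∑ S ∈ Finset.range (T+1), ((T:ℝ) - 2*S) * T.choose S
      = (T:ℝ) * (∑ S ∈ Finset.range (T+1), (T.choose S:ℝ))
        - 2 * ∑ S ∈ Finset.range (T+1), (S:ℝ) * T.choose S := by
    rw [Finset.mul_sum, Finset.mul_sum, ← Finset.sum_sub_distrib]
    exact Finset.sum_congr rfl fun S _ => by ring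
  rw [e, c2, c1]
  have h3 : (2:ℝ)^T = 2 * 2^(T-1) := by
    conv_lhs => rw [show T = (T-1)+1 by omega]
    rw [pow_succ]; ring
  linear_combination (T:ℝ) * h3

private lemma auxL2 (T h : ℕ) (h1 : 1 ≤ h) (h2 : h ≤ T) :
    ∑ S ∈ Finset.range h, ((T:ℝ) - 2*S) * T.choose S = h * T.choose h := by
  have key : ∀ S ∈ Finset.range h, ((T:ℝ) - 2*S) * T.choose S =
      (fun S => if S = 0 then (0:ℝ) else T * (T-1).choose (S-1)) (S+1)
      - (fun S => if S = 0 then (0:ℝ) else T * (T-1).choose (S-1)) S := by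
    intro S hS
    have hSh := Finset.mem_range.mp hS
    cases S with
    | zero => simp
    | succ k =>
      simp only [Nat.succ_ne_zero, if_false, Nat.add_sub_cancel]
      have hk1T : k + 1 ≤ T := by omega
      have e1 : T * (T-1).choose k = T.choose (k+1) * (k+1) := by
        have h0 := Nat.add_one_mul_choose_eq (T-1) k
        rwa [show T - 1 + 1 = T by omega] at h0
      have e2 : (T-1).choose (k+1) * T = T.choose (k+1) * (T - (k+1)) := by
        have h0 := Nat.choose_mul_succ_eq (T-1) (k+1)
        rwa [Nat.sub_add_cancel (by omega : 1 ≤ T)] at h0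
      have e1c : (T:ℝ) * (T-1).choose k = T.choose (k+1) * ((k:ℝ)+1) := by
        exact_mod_cast congrArg (Nat.cast : ℕ → ℝ) e1
      have e2c : ((T-1).choose (k+1) : ℝ) * T = T.choose (k+1) * ((T:ℝ) - ((k:ℝ)+1)) := by
        have := congrArg (Nat.cast : ℕ → ℝ) e2
        push_cast [Nat.cast_sub hk1T] at this
        linarith [this]
      push_cast
      linear_combination e1c - e2c
  rw [Finset.sum_congr rfl key, Finset.sum_range_sub
    (fun S => if S = 0 then (0:ℝ) else T * (T-1).choose (S-1)) h]
  have hne : h ≠ 0 := by omega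
  simp only [hne, if_false, eq_self_iff_true, if_true, sub_zero]
  have e3 : T * (T-1).choose (h-1) = T.choose h * h := by
    have h0 := Nat.add_one_mul_choose_eq (T-1) (h-1)
    rwa [show T - 1 + 1 = T by omega, show h - 1 + 1 = h by omega] at h0
  have := congrArg (Nat.cast : ℕ → ℝ) e3
  push_cast at this
  linarith [this]


private lemma auxA (h : ℕ) (h1 : 1 ≤ h) :
    2 * (∑ S ∈ Finset.range h, (2*h).choose S) + (2*h).choose h = 2 ^ (2*h) := by
  have base := Nat.sum_range_choose (2*h)
  have split : ∑ S ∈ Finset.range (2*h+1), (2*h).choose S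
      = (∑ S ∈ Finset.range h, (2*h).choose S) + ∑ S ∈ Finset.Ico h (2*h+1), (2*h).choose S := by
    rw [Finset.range_eq_Ico, Finset.range_eq_Ico]
    exact (Finset.sum_Ico_consecutive (fun S => (2*h).choose S) (Nat.zero_le h) (by omega : h ≤ 2*h+1)).symm
  have mid : ∑ S ∈ Finset.Ico h (2*h+1), (2*h).choose S
      = (2*h).choose h + ∑ S ∈ Finset.Ico (h+1) (2*h+1), (2*h).choose S :=
    Finset.sum_eq_sum_Ico_succ_bot (by omega) _
  have top : ∑ S ∈ Finset.Ico (h+1) (2*h+1), (2*h).choose S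
      = ∑ S ∈ Finset.range h, (2*h).choose S := by
    rw [Finset.sum_Ico_eq_sum_range, show 2*h+1 - (h+1) = h by omega]
    have e : ∀ j ∈ Finset.range h, (2*h).choose (h+1+j) = (2*h).choose (h-1-j) := by
      intro j hj
      have hj' := Finset.mem_range.mp hj
      rw [← Nat.choose_symm (by omega : h+1+j ≤ 2*h)]
      congr 1
      omega
    rw [Finset.sum_congr rfl e]
    exact Finset.sum_range_reflect (fun j => (2*h).choose j) h
  rw [split, mid, top] at base
  calc 2 * (∑ S ∈ Finset.range h, (2*h).choose S) + (2*h).choose h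
      = (∑ S ∈ Finset.range h, (2*h).choose S)
        + ((2*h).choose h + ∑ S ∈ Finset.range h, (2*h).choose S) := by ring
    _ = 2 ^ (2*h) := base

private lemma auxHalf (h : ℕ) (h1 : 1 ≤ h) : 2 * (2*h-1).choose (h-1) = (2*h).choose h := by
  have p := Nat.choose_succ_succ' (2*h-1) (h-1)
  rw [show 2*h-1+1 = 2*h by omega, show h-1+1 = h by omega] at p
  have s : (2*h-1).choose h = (2*h-1).choose (h-1) := by
    have := Nat.choose_symm (show h ≤ 2*h-1 by omega)
    rw [show 2*h-1-h = h-1 by omega] at this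
    exact this.symm
  rw [p, s]
  ring

private lemma auxB (h : ℕ) (h2 : 2 ∣ h) (h1 : 1 ≤ h) :
    ∑ S ∈ Finset.range h, (-1:ℝ)^S * (2*h).choose S = -(((2*h-1).choose (h-1) : ℕ) : ℝ) := by
  have key : ∀ S ∈ Finset.range h, (-1:ℝ)^S * (2*h).choose S =
      (fun S => if S = 0 then (0:ℝ) else (-1:ℝ)^(S-1) * (2*h-1).choose (S-1)) (S+1)
      - (fun S => if S = 0 then (0:ℝ) else (-1:ℝ)^(S-1) * (2*h-1).choose (S-1)) S := by
    intro S hS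
    cases S with
    | zero => simp
    | succ k =>
      simp only [Nat.succ_ne_zero, if_false, Nat.add_sub_cancel]
      have p := Nat.choose_succ_succ' (2*h-1) k
      rw [show 2*h-1+1 = 2*h by omega] at p
      have pc : ((2*h).choose (k+1) : ℝ) = (2*h-1).choose k + (2*h-1).choose (k+1) := by
        exact_mod_cast congrArg (Nat.cast : ℕ → ℝ) p
      rw [pc, pow_succ]
      ring
  rw [Finset.sum_congr rfl key, Finset.sum_range_sub
    (fun S => if S = 0 then (0:ℝ) else (-1:ℝ)^(S-1) * (2*h-1).choose (S-1)) h]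
  have hne : h ≠ 0 := by omega
  simp only [hne, if_false, eq_self_iff_true, if_true, sub_zero]
  obtain ⟨j, hj⟩ := h2
  have hodd : Odd (h-1) := ⟨j-1, by omega⟩
  rw [hodd.neg_one_pow]
  ring

private lemma auxL3 (h : ℕ) (h2 : 2 ∣ h) (h1 : 1 ≤ h) :
    ∑ S ∈ Finset.range h, ((S % 2 : ℕ):ℝ) * (2*h).choose S = (2:ℝ)^(2*h)/4 := by
  have pt : ∀ S ∈ Finset.range h, ((S % 2 : ℕ):ℝ) * (2*h).choose S
      = ((2*h).choose S : ℝ)/2 - ((-1:ℝ)^S * (2*h).choose S)/2 := by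
    intro S _
    rcases Nat.even_or_odd S with he | ho
    · rw [Nat.even_iff.mp he, he.neg_one_pow]; push_cast; ring
    · rw [Nat.odd_iff.mp ho, ho.neg_one_pow]; push_cast; ring
  rw [Finset.sum_congr rfl pt, Finset.sum_sub_distrib]
  have hA := auxA h h1
  have hAc : (∑ S ∈ Finset.range h, ((2*h).choose S : ℝ))
      = ((2:ℝ)^(2*h) - (2*h).choose h)/2 := by
    have := congrArg (Nat.cast : ℕ → ℝ) hA
    push_cast at this
    linarith
  have hH := auxHalf h h1
  have hHc : 2 * (((2*h-1).choose (h-1) : ℕ) : ℝ) = ((2*h).choose h : ℝ) := by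
    exact_mod_cast congrArg (Nat.cast : ℕ → ℝ) hH
  have hB := auxB h h2 h1
  calc (∑ S ∈ Finset.range h, ((2*h).choose S : ℝ)/2)
        - ∑ S ∈ Finset.range h, ((-1:ℝ)^S * (2*h).choose S)/2
      = (∑ S ∈ Finset.range h, ((2*h).choose S : ℝ))/2
        - (∑ S ∈ Finset.range h, (-1:ℝ)^S * (2*h).choose S)/2 := by
        rw [← Finset.sum_div, ← Finset.sum_div]
    _ = (2:ℝ)^(2*h)/4 := by
        rw [hAc, hB]
        linarith


theorem stmt_7 (T : ℕ) (hT : 0 < T) (h4 : 4 ∣ T) :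
    (T : ℝ) / 2 - (1 / 2 ^ T) *
        ∑ S ∈ Finset.range (T + 1),
          (if (S : ℝ) ≥ (T : ℝ) / 2 then ((S : ℝ) + T) / 3
            else 2 * (S : ℝ) / 3 + (((3 * T - 2 * S) / 4 : ℕ) : ℝ) / 3) * Nat.choose T S ≥
      1 / 24 + (Real.sqrt 2 / 48) * Real.sqrt T := by
  obtain ⟨mq, hmq⟩ := h4
  obtain ⟨h, rfl⟩ : ∃ h, T = 2 * h := ⟨2*mq, by omega⟩
  have hh2 : 2 ∣ h := ⟨mq, by omega⟩
  have hh1 : 1 ≤ h := by omega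
  -- pointwise decomposition
  have point : ∀ S ∈ Finset.range (2*h + 1),
      (((2*h:ℕ):ℝ)/2 - (if (S : ℝ) ≥ ((2*h:ℕ) : ℝ) / 2 then ((S : ℝ) + (2*h:ℕ)) / 3
          else 2 * (S : ℝ) / 3 + (((3 * (2*h) - 2 * S) / 4 : ℕ) : ℝ) / 3)) * ((2*h).choose S : ℝ)
      = (((2*h:ℕ):ℝ) - 2*S)/6 * (2*h).choose S
        + (if S < h then ((((2*h:ℕ):ℝ) - 2*S)/12 + ((S % 2 : ℕ):ℝ)/6) * (2*h).choose S else 0) := by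
    intro S hS
    have hST : S ≤ 2*h := by
      have := Finset.mem_range.mp hS; omega
    by_cases hcase : S < h
    · have hlt : ¬ ((S:ℝ) ≥ ((2*h:ℕ):ℝ)/2) := by
        rw [not_le]
        push_cast
        have : (S:ℝ) < h := by exact_mod_cast hcase
        linarith
      rw [if_neg hlt, if_pos hcase]
      have hfl : 4 * ((3*(2*h) - 2*S)/4) + 2*(S % 2) + 2*S = 3*(2*h) := by omega
      have hflR : (((3*(2*h) - 2*S)/4 : ℕ) : ℝ)
          = (3*((2*h:ℕ):ℝ) - 2*S - 2*((S % 2 : ℕ):ℝ))/4 := by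
        have := congrArg (Nat.cast : ℕ → ℝ) hfl
        push_cast at this ⊢
        linarith
      rw [hflR]
      push_cast
      ring
    · have hge : (S:ℝ) ≥ ((2*h:ℕ):ℝ)/2 := by
        push_cast
        have : (h:ℝ) ≤ S := by exact_mod_cast not_lt.mp hcase
        linarith
      rw [if_pos hge, if_neg hcase]
      push_cast
      ring
  -- key sum evaluation
  have key : ∑ S ∈ Finset.range (2*h + 1),
      (((2*h:ℕ):ℝ)/2 - (if (S : ℝ) ≥ ((2*h:ℕ) : ℝ) / 2 then ((S : ℝ) + (2*h:ℕ)) / 3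
          else 2 * (S : ℝ) / 3 + (((3 * (2*h) - 2 * S) / 4 : ℕ) : ℝ) / 3)) * ((2*h).choose S : ℝ)
      = (h:ℝ) * ((2*h).choose h) / 12 + (2:ℝ)^(2*h)/24 := by
    rw [Finset.sum_congr rfl point, Finset.sum_add_distrib]
    have part1 : ∑ S ∈ Finset.range (2*h+1), (((2*h:ℕ):ℝ) - 2*S)/6 * (2*h).choose S = 0 := by
      have e : ∀ S ∈ Finset.range (2*h+1), (((2*h:ℕ):ℝ) - 2*S)/6 * (2*h).choose S
          = ((((2*h:ℕ):ℝ) - 2*S) * (2*h).choose S)/6 := fun S _ => by ring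
      rw [Finset.sum_congr rfl e, ← Finset.sum_div, auxL1 (2*h) (by omega)]
      norm_num
    have part2 : ∑ S ∈ Finset.range (2*h+1),
        (if S < h then ((((2*h:ℕ):ℝ) - 2*S)/12 + ((S % 2 : ℕ):ℝ)/6) * (2*h).choose S else 0)
        = (h:ℝ) * ((2*h).choose h) / 12 + (2:ℝ)^(2*h)/24 := by
      rw [← Finset.sum_subset (Finset.range_subset_range.mpr (show h ≤ 2*h+1 by omega))
          (fun x _ hx => if_neg (fun c => hx (Finset.mem_range.mpr c)))]
      rw [Finset.sum_congr rfl (fun S hS => if_pos (Finset.mem_range.mp hS))]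
      have e : ∀ S ∈ Finset.range h, ((((2*h:ℕ):ℝ) - 2*S)/12 + ((S % 2 : ℕ):ℝ)/6) * (2*h).choose S
          = ((((2*h:ℕ):ℝ) - 2*S) * (2*h).choose S)/12 + (((S % 2 : ℕ):ℝ) * (2*h).choose S)/6 :=
        fun S _ => by ring
      rw [Finset.sum_congr rfl e, Finset.sum_add_distrib, ← Finset.sum_div, ← Finset.sum_div]
      have l2 : ∑ S ∈ Finset.range h, (((2*h:ℕ):ℝ) - 2*S) * (2*h).choose S
          = (h:ℝ) * (2*h).choose h := by
        have := auxL2 (2*h) h hh1 (by omega)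
        push_cast at this ⊢
        exact this
      rw [l2, auxL3 h hh2 hh1]
      ring
    rw [part1, part2]
    ring
  -- rewrite the difference using key
  have expand : ∑ S ∈ Finset.range (2*h + 1),
      (((2*h:ℕ):ℝ)/2 - (if (S : ℝ) ≥ ((2*h:ℕ) : ℝ) / 2 then ((S : ℝ) + (2*h:ℕ)) / 3
          else 2 * (S : ℝ) / 3 + (((3 * (2*h) - 2 * S) / 4 : ℕ) : ℝ) / 3)) * ((2*h).choose S : ℝ)
      = ((2*h:ℕ):ℝ)/2 * 2^(2*h)
        - ∑ S ∈ Finset.range (2*h + 1),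
          (if (S : ℝ) ≥ ((2*h:ℕ) : ℝ) / 2 then ((S : ℝ) + (2*h:ℕ)) / 3
            else 2 * (S : ℝ) / 3 + (((3 * (2*h) - 2 * S) / 4 : ℕ) : ℝ) / 3) * ((2*h).choose S : ℝ) := by
    have e : ∀ S ∈ Finset.range (2*h+1),
        (((2*h:ℕ):ℝ)/2 - (if (S : ℝ) ≥ ((2*h:ℕ) : ℝ) / 2 then ((S : ℝ) + (2*h:ℕ)) / 3
          else 2 * (S : ℝ) / 3 + (((3 * (2*h) - 2 * S) / 4 : ℕ) : ℝ) / 3)) * ((2*h).choose S : ℝ)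
        = ((2*h:ℕ):ℝ)/2 * ((2*h).choose S : ℝ)
          - (if (S : ℝ) ≥ ((2*h:ℕ) : ℝ) / 2 then ((S : ℝ) + (2*h:ℕ)) / 3
            else 2 * (S : ℝ) / 3 + (((3 * (2*h) - 2 * S) / 4 : ℕ) : ℝ) / 3) * ((2*h).choose S : ℝ) :=
      fun S _ => by ring
    rw [Finset.sum_congr rfl e, Finset.sum_sub_distrib, ← Finset.mul_sum]
    have sumC : ∑ S ∈ Finset.range (2*h+1), ((2*h).choose S : ℝ) = 2^(2*h) := by
      exact_mod_cast congrArg (Nat.cast : ℕ → ℝ) (Nat.sum_range_choose (2*h))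
    rw [sumC]
  have hA : ∑ S ∈ Finset.range (2*h + 1),
      (if (S : ℝ) ≥ ((2*h:ℕ) : ℝ) / 2 then ((S : ℝ) + (2*h:ℕ)) / 3
        else 2 * (S : ℝ) / 3 + (((3 * (2*h) - 2 * S) / 4 : ℕ) : ℝ) / 3) * ((2*h).choose S : ℝ)
      = ((2*h:ℕ):ℝ)/2 * 2^(2*h) - ((h:ℝ) * ((2*h).choose h) / 12 + (2:ℝ)^(2*h)/24) := by
    linarith [expand, key]
  rw [ge_iff_le, hA]
  -- the analytic bound
  have cb := aux_cb h hh1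
  have cbT : (4:ℝ)^h ≤ 2 * ((2*h).choose h : ℝ) * Real.sqrt h := by
    have : Nat.centralBinom h = (2*h).choose h := rfl
    rwa [this] at cb
  have m1 : (4:ℝ)^h * Real.sqrt h ≤ 2*((2*h).choose h : ℝ)*(h:ℝ) :=
    calc (4:ℝ)^h * Real.sqrt h
        ≤ 2 * ((2*h).choose h : ℝ) * Real.sqrt h * Real.sqrt h :=
          mul_le_mul_of_nonneg_right cbT (Real.sqrt_nonneg _)
      _ = 2*((2*h).choose h : ℝ)*(Real.sqrt h * Real.sqrt h) := by ring
      _ = 2*((2*h).choose h : ℝ)*(h:ℝ) := by rw [Real.mul_self_sqrt (by positivity)]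
  have hsq : Real.sqrt 2 * Real.sqrt ((2*h:ℕ):ℝ) = 2 * Real.sqrt h := by
    rw [← Real.sqrt_mul (by norm_num : (0:ℝ) ≤ 2)]
    push_cast
    rw [show (2:ℝ)*(2*(h:ℝ)) = 2^2 * h by ring, Real.sqrt_mul (by positivity) (h:ℝ),
      Real.sqrt_sq (by norm_num : (0:ℝ) ≤ 2)]
  have pow_eq : (2:ℝ)^(2*h) = 4^h := by
    rw [pow_mul]; norm_num
  have bound : Real.sqrt 2 / 48 * Real.sqrt ((2*h:ℕ):ℝ)
      ≤ (h:ℝ) * ((2*h).choose h : ℝ) / 12 / 2^(2*h) := by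
    have L : Real.sqrt 2 / 48 * Real.sqrt ((2*h:ℕ):ℝ) = Real.sqrt h / 24 := by
      rw [div_mul_eq_mul_div, hsq]; ring
    rw [L, pow_eq, div_div, div_le_div_iff₀ (by norm_num : (0:ℝ) < 24)
      (by positivity : (0:ℝ) < 12 * 4^h)]
    nlinarith [m1]
  have hp : (0:ℝ) < (2:ℝ)^(2*h) := by positivity
  have LHSeq : ((2*h:ℕ):ℝ)/2 - 1/2^(2*h) * (((2*h:ℕ):ℝ)/2 * 2^(2*h)
      - ((h:ℝ) * ((2*h).choose h) / 12 + (2:ℝ)^(2*h)/24))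
      = (h:ℝ) * ((2*h).choose h : ℝ) / 12 / 2^(2*h) + 1/24 := by
    field_simp
    ring
  calc (1:ℝ)/24 + Real.sqrt 2 / 48 * Real.sqrt ((2*h:ℕ):ℝ)
      ≤ 1/24 + (h:ℝ) * ((2*h).choose h : ℝ) / 12 / 2^(2*h) := by linarith [bound]
    _ = ((2*h:ℕ):ℝ)/2 - 1/2^(2*h) * (((2*h:ℕ):ℝ)/2 * 2^(2*h)
        - ((h:ℝ) * ((2*h).choose h) / 12 + (2:ℝ)^(2*h)/24)) := by rw [LHSeq]; ring
end

section
/- Let ρ, v̄ be reals with 0 < ρ ≤ v̄, and let (λ_t) be a sequence of nonnegative reals with λ_1 = 0, satisfying the recursion λ_{t+1} = max(λ_t + η_t (z_t − ρ), 0) where η_t = 1/(v̄ √t) and z_t ∈ [0, v̄/(1 + λ_t)]. Then λ_t ≤ v̄/ρ − 1 for all t ≥ 1. -/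
theorem stmt_8 (vmax ρ : ℝ) (hρ : 0 < ρ) (hρv : ρ ≤ vmax)
    (lam z : ℕ → ℝ) (hl1 : lam 1 = 0) (hnn : ∀ t, 0 ≤ lam t)
    (hz : ∀ t, 1 ≤ t → 0 ≤ z t ∧ z t ≤ vmax / (1 + lam t))
    (hupd : ∀ t, 1 ≤ t →
      lam (t + 1) = max (lam t + (1 / (vmax * Real.sqrt t)) * (z t - ρ)) 0) :
    ∀ t, 1 ≤ t → lam t ≤ vmax / ρ - 1 := by
  have hv : 0 < vmax := lt_of_lt_of_le hρ hρv
  have hB0 : 0 ≤ vmax / ρ - 1 := by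
    have : 1 ≤ vmax / ρ := (one_le_div hρ).mpr hρv
    linarith
  have hvB : vmax = ρ * ((vmax / ρ - 1) + 1) := by
    field_simp
    ring
  intro t ht
  induction t, ht using Nat.le_induction with
  | base => rw [hl1]; exact hB0
  | succ n hn ih =>
    have hlamn := hnn n
    have h1l : (0:ℝ) < 1 + lam n := by linarith
    have hs1 : (1:ℝ) ≤ Real.sqrt n := by
      have h1n : (1:ℝ) ≤ (n:ℝ) := by exact_mod_cast hn
      calc (1:ℝ) = Real.sqrt 1 := (Real.sqrt_one).symm
        _ ≤ Real.sqrt n := Real.sqrt_le_sqrt h1n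
    have hsp : (0:ℝ) < Real.sqrt n := lt_of_lt_of_le one_pos hs1
    set η : ℝ := 1 / (vmax * Real.sqrt n) with hηdef
    have hηpos : 0 < η := by positivity
    have hηρ : η * ρ ≤ 1 := by
      rw [hηdef]
      rw [div_mul_eq_mul_div, one_mul, div_le_one (by positivity)]
      calc ρ ≤ vmax := hρv
        _ = vmax * 1 := (mul_one _).symm
        _ ≤ vmax * Real.sqrt n := by nlinarith
    obtain ⟨hz0, hz1⟩ := hz n hn
    have hz2 : z n * (1 + lam n) ≤ vmax := by
      rw [div_eq_mul_inv] at hz1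
      calc z n * (1 + lam n) ≤ vmax * (1 + lam n)⁻¹ * (1 + lam n) := by
            apply mul_le_mul_of_nonneg_right hz1 (le_of_lt h1l)
        _ = vmax := by field_simp
    rw [hupd n hn]
    apply max_le _ hB0
    -- goal: lam n + η * (z n - ρ) ≤ vmax / ρ - 1
    set B := vmax / ρ - 1 with hBdef
    have hle : lam n ≤ B := ih
    -- multiply through by (1 + lam n) > 0
    have h1 : η * (z n * (1 + lam n)) ≤ η * vmax :=
      mul_le_mul_of_nonneg_left hz2 hηpos.le
    have h3 : η * vmax = η * ρ * B + η * ρ := by rw [hvB]; ring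
    have h2 : 0 ≤ (1 + lam n - η * ρ) * (B - lam n) :=
      mul_nonneg (by linarith) (by linarith)
    have hmul : (lam n + η * (z n - ρ)) * (1 + lam n) ≤ B * (1 + lam n) := by
      nlinarith [h1, h3, h2]
    have key : lam n + η * (z n - ρ) ≤ B := le_of_mul_le_mul_right hmul h1l
    rw [hηdef] at key
    exact key
end

section
/- Let 0 < ρ ≤ v̄, η_t = 1/(v̄√t), and suppose λ_2 = 0, 0 ≤ λ_t ≤ v̄/ρ − 1 for all t, and λ_{t+1} ≥ λ_t + η_t(z_t − ρ) for t = 2,…,T₀ with T₀ ≤ T. Then ∑_{t=2}^{T₀} (z_t − ρ) ≤ (v̄/ρ − 1)/η_T = (v̄/ρ − 1)·v̄·√T. -/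
lemma abel_aux (lam : ℕ → ℝ) (hl2 : lam 2 = 0) (hnn : ∀ t, 0 ≤ lam t) :
    ∀ n : ℕ, 2 ≤ n →
      ∑ t ∈ Finset.Icc 2 n, Real.sqrt t * (lam (t + 1) - lam t)
        ≤ lam (n + 1) * Real.sqrt n := by
  intro n hn
  induction n, hn using Nat.le_induction with
  | base =>
      simp [hl2]
      ring_nf
      simp [mul_comm]
  | succ n hn ih =>
      rw [Finset.sum_Icc_succ_top (by omega : 2 ≤ n + 1)]
      have h1 : Real.sqrt n ≤ Real.sqrt (n + 1) := by
        apply Real.sqrt_le_sqrt; push_cast; linarith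
      have h2 := hnn (n + 1)
      push_cast
      nlinarith [ih, Real.sqrt_nonneg (n : ℝ)]

theorem stmt_14 (vmax ρ : ℝ) (hρ : 0 < ρ) (hρv : ρ ≤ vmax)
    (lam z : ℕ → ℝ) (T T₀ : ℕ) (hT₀ : 2 ≤ T₀) (hTT : T₀ ≤ T)
    (hl2 : lam 2 = 0) (hb : ∀ t, 0 ≤ lam t ∧ lam t ≤ vmax / ρ - 1)
    (hupd : ∀ t ∈ Finset.Icc 2 T₀,
      lam (t + 1) ≥ lam t + (1 / (vmax * Real.sqrt t)) * (z t - ρ)) :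
    ∑ t ∈ Finset.Icc 2 T₀, (z t - ρ) ≤ (vmax / ρ - 1) * vmax * Real.sqrt T := by
  have hv : 0 < vmax := lt_of_lt_of_le hρ hρv
  have step : ∀ t ∈ Finset.Icc 2 T₀,
      z t - ρ ≤ vmax * (Real.sqrt t * (lam (t + 1) - lam t)) := by
    intro t ht
    have h2t : 2 ≤ t := (Finset.mem_Icc.mp ht).1
    have hst : 0 < Real.sqrt t := Real.sqrt_pos.mpr (by positivity)
    have := hupd t ht
    have hpos : 0 < vmax * Real.sqrt t := by positivity
    rw [ge_iff_le, ← sub_nonneg] at this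
    have := mul_le_mul_of_nonneg_left (sub_nonneg.mp (by linarith [this]) :
      (1 / (vmax * Real.sqrt t)) * (z t - ρ) ≤ lam (t + 1) - lam t) hpos.le
    calc z t - ρ = vmax * Real.sqrt t * ((1 / (vmax * Real.sqrt t)) * (z t - ρ)) := by
          field_simp
      _ ≤ vmax * Real.sqrt t * (lam (t + 1) - lam t) := this
      _ = vmax * (Real.sqrt t * (lam (t + 1) - lam t)) := by ring
  have hsum := Finset.sum_le_sum step
  rw [← Finset.mul_sum] at hsum
  have habel := abel_aux lam hl2 (fun t => (hb t).1) T₀ hT₀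
  have hsT : Real.sqrt T₀ ≤ Real.sqrt T := by
    apply Real.sqrt_le_sqrt; exact_mod_cast hTT
  have hlb := (hb (T₀ + 1)).2
  have hlnn := (hb (T₀ + 1)).1
  have hsnn : (0:ℝ) ≤ Real.sqrt T₀ := Real.sqrt_nonneg _
  have hbnn : (0:ℝ) ≤ vmax / ρ - 1 := le_trans hlnn hlb
  calc ∑ t ∈ Finset.Icc 2 T₀, (z t - ρ)
      ≤ vmax * (lam (T₀ + 1) * Real.sqrt T₀) := le_trans hsum (by nlinarith)
    _ ≤ (vmax / ρ - 1) * vmax * Real.sqrt T := by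
        have h := mul_le_mul hlb hsT hsnn hbnn
        nlinarith [h]
end

section
/- Fix μ > 0 and set ε = μ/(3μ + 6), and let T be a positive integer. Consider T rounds where v_t = 2/3 for all t, budget ρT with ρ = 1/3, and an adaptive adversary setting p_t = 2/3 − ε if the buyer enters round t (x_t = 1) and p_t = ε otherwise. Then for any deterministic decision sequence (x_t) respecting the budget constraint ∑ x_t p_t 1[v_t ≥ p_t] ≤ T/3, the buyer's revenue R = ∑ x_t (v_t − p_t)⁺ and the hindsight optimum H = max over feasible x' of ∑ x'_t (v_t − p_t)⁺ satisfy R − μ·H < 0. -/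
set_option maxHeartbeats 1000000 in
theorem stmt_15 (μ : ℝ) (hμ : 0 < μ) (T : ℕ) (hT : 0 < T)
    (x : ℕ → ℕ) (hx : ∀ t, x t ≤ 1)
    (p : ℕ → ℝ)
    (hp : ∀ t, p t = if x t = 1 then 2 / 3 - μ / (3 * μ + 6) else μ / (3 * μ + 6))
    (hbudget : ∑ t ∈ Finset.Icc 1 T,
        (x t : ℝ) * (p t * (if (2 : ℝ) / 3 ≥ p t then 1 else 0)) ≤ (T : ℝ) / 3)
    (H : ℝ)
    (hH : IsGreatest {r : ℝ | ∃ x' : ℕ → ℕ, (∀ t, x' t ≤ 1) ∧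
        (∑ t ∈ Finset.Icc 1 T,
          (x' t : ℝ) * (p t * (if (2 : ℝ) / 3 ≥ p t then 1 else 0)) ≤ (T : ℝ) / 3) ∧
        r = ∑ t ∈ Finset.Icc 1 T, (x' t : ℝ) * max ((2 : ℝ) / 3 - p t) 0} H) :
    (∑ t ∈ Finset.Icc 1 T, (x t : ℝ) * max ((2 : ℝ) / 3 - p t) 0) - μ * H < 0 := by
  set ε : ℝ := μ / (3 * μ + 6) with hεdef
  clear_value ε
  have hd : (0:ℝ) < 3 * μ + 6 := by linarith
  have hε0 : 0 < ε := by rw [hεdef]; exact div_pos hμ hd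
  have hε3 : ε < 1/3 := by
    rw [hεdef, div_lt_iff₀ hd]; linarith
  have hT1 : (1:ℝ) ≤ (T : ℝ) := by exact_mod_cast hT
  set n : ℝ := ∑ t ∈ Finset.Icc 1 T, (x t : ℝ) with hn
  clear_value n
  have hn0 : 0 ≤ n := by rw [hn]; exact Finset.sum_nonneg (fun t _ => by positivity)
  have hnT : n ≤ T := by
    rw [hn]
    calc ∑ t ∈ Finset.Icc 1 T, (x t : ℝ) ≤ ∑ t ∈ Finset.Icc 1 T, (1:ℝ) :=
          Finset.sum_le_sum (fun t _ => by exact_mod_cast hx t)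
      _ = T := by simp
  have hRev : (∑ t ∈ Finset.Icc 1 T, (x t : ℝ) * max ((2:ℝ)/3 - p t) 0) = ε * n := by
    rw [hn, Finset.mul_sum]
    apply Finset.sum_congr rfl
    intro t _
    rw [hp t]
    by_cases h : x t = 1
    · rw [if_pos h, show (2:ℝ)/3 - (2/3 - ε) = ε by ring, max_eq_left hε0.le, h]
      push_cast; ring
    · have h0 : x t = 0 := by have := hx t; omega
      simp [h0]
  have hBud : (2/3 - ε) * n ≤ (T : ℝ) / 3 := by
    calc (2/3 - ε) * n = ∑ t ∈ Finset.Icc 1 T,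
            (x t : ℝ) * (p t * (if (2 : ℝ) / 3 ≥ p t then 1 else 0)) := by
          rw [hn, Finset.mul_sum]
          apply Finset.sum_congr rfl
          intro t _
          rw [hp t]
          by_cases h : x t = 1
          · rw [if_pos h, if_pos (by linarith : (2:ℝ)/3 ≥ 2/3 - ε), h]
            push_cast; ring
          · have h0 : x t = 0 := by have := hx t; omega
            simp [h0]
      _ ≤ (T : ℝ) / 3 := hbudget
  -- lower bound on H using x' = 1 - x
  have hcast : ∀ t, ((1 - x t : ℕ) : ℝ) = 1 - (x t : ℝ) := by
    intro t
    have := hx t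
    push_cast [Nat.cast_sub this]
    ring
  have hsum1 : ∑ t ∈ Finset.Icc 1 T, (1 - (x t : ℝ)) = (T : ℝ) - n := by
    rw [Finset.sum_sub_distrib, hn]
    simp [Nat.card_Icc]
  have hHlb : (2/3 - ε) * ((T : ℝ) - n) ≤ H := by
    apply hH.2
    refine ⟨fun t => 1 - x t, fun t => Nat.sub_le 1 (x t), ?_, ?_⟩
    · have e : ∑ t ∈ Finset.Icc 1 T,
          ((1 - x t : ℕ) : ℝ) * (p t * (if (2 : ℝ) / 3 ≥ p t then 1 else 0))
          = ε * ((T : ℝ) - n) := by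
        rw [← hsum1, Finset.mul_sum]
        apply Finset.sum_congr rfl
        intro t _
        rw [hp t, hcast t]
        by_cases h : x t = 1
        · rw [if_pos h, h]; push_cast; ring
        · have h0 : x t = 0 := by have := hx t; omega
          rw [if_neg h, if_pos (by linarith : (2:ℝ)/3 ≥ ε), h0]
          push_cast; ring
      rw [e]
      nlinarith [hε0.le, hn0, hnT, hε3, hT1]
    · rw [← hsum1, Finset.mul_sum]
      apply Finset.sum_congr rfl
      intro t _
      rw [hp t, hcast t]
      by_cases h : x t = 1
      · rw [if_pos h, h]; push_cast; ring
      · have h0 : x t = 0 := by have := hx t; omega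
        rw [if_neg h, show max ((2:ℝ)/3 - ε) 0 = 2/3 - ε from max_eq_left (by linarith), h0]
        push_cast; ring
  -- key arithmetic inequality
  have e1 : ε + μ*(2/3 - ε) = (μ^2 + 5*μ)/(3*μ+6) := by
    rw [hεdef]; field_simp; ring
  have e2 : 3*μ*(2/3 - ε)^2 = (3*μ*(μ+4)^2)/((3*μ+6)^2) := by
    rw [hεdef]; field_simp; ring
  have hkey : ε + μ*(2/3 - ε) < 3*μ*(2/3 - ε)^2 := by
    rw [e1, e2, div_lt_div_iff₀ hd (by positivity)]
    nlinarith [hμ, mul_pos hμ hμ, mul_pos (mul_pos hμ hμ) hμ]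
  have h3c : (0:ℝ) < 2 - 3*ε := by linarith
  have hc : (0:ℝ) < 2/3 - ε := by linarith
  have hpos : (0:ℝ) ≤ ε + μ*(2/3 - ε) := by nlinarith [mul_pos hμ hc]
  have h1 : (ε + μ*(2/3-ε)) * ((2/3-ε)*n) ≤ (ε + μ*(2/3-ε)) * ((T:ℝ)/3) :=
    mul_le_mul_of_nonneg_left hBud hpos
  have h2 : (ε + μ*(2/3-ε)) * ((T:ℝ)/3) < (3*μ*(2/3-ε)^2) * ((T:ℝ)/3) :=
    mul_lt_mul_of_pos_right hkey (by linarith)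
  have h3 : (2/3-ε) * ((ε + μ*(2/3-ε)) * n) < (2/3-ε) * (μ*((2/3-ε)*(T:ℝ))) := by
    linarith [lt_of_le_of_lt h1 h2]
  have h4 : (ε + μ*(2/3-ε)) * n < μ*((2/3-ε)*(T:ℝ)) := (mul_lt_mul_iff_right₀ hc).mp h3
  have hmain : ε * n < μ * ((2/3 - ε) * ((T : ℝ) - n)) := by linarith [h4]
  have hμH : μ * ((2/3 - ε) * ((T : ℝ) - n)) ≤ μ * H :=
    mul_le_mul_of_nonneg_left hHlb hμ.le
  rw [hRev]
  linarith
end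

section
/- Let m ≥ 2 be an integer, ε ∈ (0,1], p > 0, and define utilities u_i = p·ε^{m+1−i} for i = 1,…,m and probabilities q_i where q_1 = ε^{m−1}, q_i = ε^{m−i} − ε^{m−i+1} for 2 ≤ i ≤ m−1, and q_m = 1 − ε. Let U be the m×m lower-triangular-type matrix with U_{i,j} = u_j if j ≤ m+1−i and 0 otherwise. Then for any vector x ∈ ℝ^m, qᵀ U x = p·ε^m·(x_1 + ⋯ + x_m). -/
theorem stmt_16 (m : ℕ) (hm : 2 ≤ m) (ε p : ℝ) (hε : ε ∈ Set.Ioc (0 : ℝ) 1) (hp : 0 < p)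
    (u q : Fin m → ℝ)
    (hu : ∀ j : Fin m, u j = p * ε ^ (m - j.val))
    (hq1 : ∀ i : Fin m, i.val = 0 → q i = ε ^ (m - 1))
    (hqm : ∀ i : Fin m, i.val = m - 1 → q i = 1 - ε)
    (hqmid : ∀ i : Fin m, 0 < i.val → i.val < m - 1 →
      q i = ε ^ (m - 1 - i.val) - ε ^ (m - i.val))
    (U : Fin m → Fin m → ℝ)
    (hU : ∀ i j : Fin m, U i j = if i.val + j.val < m then u j else 0)
    (x : Fin m → ℝ) :
    ∑ i, q i * ∑ j, U i j * x j = p * ε ^ m * ∑ j, x j := by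
  have h0m : 0 < m := lt_of_lt_of_le (by norm_num) hm
  -- unified formula for q i for i ≥ 1
  have hq' : ∀ i : Fin m, 1 ≤ i.val → q i = ε ^ (m - 1 - i.val) - ε ^ (m - i.val) := by
    intro i hi
    by_cases h : i.val = m - 1
    · rw [hqm i h, h]
      have h1 : m - 1 - (m - 1) = 0 := Nat.sub_self _
      have h2 : m - (m - 1) = 1 := by omega
      rw [h1, h2]; simp
    · exact hqmid i hi (by have := i.isLt; omega)
  -- partial sums of q
  have key : ∀ K, 1 ≤ K → K ≤ m →
      (∑ i : Fin m, if i.val < K then q i else 0) = ε ^ (m - K) := by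
    intro K hK
    induction K, hK using Nat.le_induction with
    | base =>
      intro _
      rw [Finset.sum_eq_single (⟨0, h0m⟩ : Fin m)]
      · simp [hq1 ⟨0, h0m⟩ rfl]
      · intro b _ hb
        have : b.val ≠ 0 := by
          intro h; apply hb; exact Fin.ext h
        rw [if_neg (by omega)]
      · intro h; exact absurd (Finset.mem_univ _) h
    | succ K hK ih =>
      intro hKm
      have hKm' : K < m := by omega
      have split : ∀ i : Fin m, (if i.val < K + 1 then q i else 0) =
          (if i.val < K then q i else 0) + (if i = ⟨K, hKm'⟩ then q i else 0) := by
        intro i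
        rcases lt_trichotomy i.val K with h | h | h
        · rw [if_pos (by omega), if_pos h, if_neg (by intro hh; exact absurd (congrArg Fin.val hh) (by simp; omega))]
          ring
        · rw [if_pos (by omega), if_neg (by omega), if_pos (Fin.ext h)]; ring
        · rw [if_neg (by omega), if_neg (by omega), if_neg (by intro hh; exact absurd (congrArg Fin.val hh) (by simp; omega))]
          ring
      rw [Finset.sum_congr rfl (fun i _ => split i), Finset.sum_add_distrib,
        ih (by omega), Finset.sum_ite_eq' Finset.univ (⟨K, hKm'⟩ : Fin m) q,
        if_pos (Finset.mem_univ _), hq' ⟨K, hKm'⟩ hK]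
      have h1 : m - 1 - K = m - (K + 1) := by omega
      rw [h1]; ring
  -- rewrite each row
  have row : ∀ i : Fin m, q i * ∑ j, U i j * x j =
      ∑ j, (if i.val + j.val < m then q i else 0) * (u j * x j) := by
    intro i
    rw [Finset.mul_sum]
    refine Finset.sum_congr rfl (fun j _ => ?_)
    rw [hU i j]
    split_ifs <;> ring
  rw [Finset.sum_congr rfl (fun i _ => row i), Finset.sum_comm]
  have col : ∀ j : Fin m, (∑ i : Fin m, (if i.val + j.val < m then q i else 0) * (u j * x j))
      = p * ε ^ m * x j := by
    intro j
    rw [← Finset.sum_mul]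
    have hiff : ∀ i : Fin m, (if i.val + j.val < m then q i else 0) =
        (if i.val < m - j.val then q i else 0) := by
      intro i
      have : (i.val + j.val < m) ↔ (i.val < m - j.val) := by omega
      simp [this]
    rw [Finset.sum_congr rfl (fun i _ => hiff i),
      key (m - j.val) (by have := j.isLt; omega) (Nat.sub_le _ _)]
    have h1 : m - (m - j.val) = j.val := by have := j.isLt; omega
    rw [h1, hu j]
    have h2 : j.val + (m - j.val) = m := by have := j.isLt; omega
    have h3 : ε ^ j.val * ε ^ (m - j.val) = ε ^ m := by rw [← pow_add, h2]
    linear_combination (p * x j) * h3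
  rw [Finset.sum_congr rfl (fun j _ => col j), ← Finset.mul_sum]
end
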